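/- arXiv:1912.10763 — 4 statements merged into one kernel-verified Lean document; each statement's English description precedes it below -/
import Mathlib

section
/- Let Q be a smooth manifold, V → Q a vector bundle equipped with a fiberwise Lie bracket [·,·] making it a Lie algebra bundle, a V-valued 2-form ω on Q, and an affine connection ∇ on V. Then the operation on sections of TQ ⊕ V defined by [X₁⊕w₁, X₂⊕w₂] = [X₁,X₂] ⊕ (∇_{X₁}w₂ − ∇_{X₂}w₁ − ω(X₁,X₂) + [w₁,w₂]) is a Lie bracket if and only if the following three conditions hold: (a) d_∇ ω = 0; (b) ∇_X[v,w] = [∇_X v, w] + [v, ∇_X w] for all vector fields X and sections v, w of V; (c) k_∇(X,Y)v = −[ω(X,Y), v] for all vector fields X, Y and sections v of V, where k_∇ is the curvature of ∇. -/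
/-!
Algebraic model of a Lagrange–Poincaré bundle `TQ ⊕ V → Q`:
`X` plays the role of the Lie algebra of vector fields `𝔛(Q)` (sections of `TQ`),
`W` plays the role of the space of sections `Γ(V)`,
`nabla` is the affine connection `∇` on `V`, `omega` is the `V`-valued 2-form `ω`,
and `brkt` is the fiberwise Lie bracket of the Lie algebra bundle `V`.
-/

/-- The candidate Lagrange–Poincaré bracket on sections of `TQ ⊕ V`:
`[X₁⊕w₁, X₂⊕w₂] = [X₁,X₂] ⊕ (∇_{X₁}w₂ − ∇_{X₂}w₁ − ω(X₁,X₂) + [w₁,w₂])`. -/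
def lpBracket {X W : Type*} [LieRing X] [AddCommGroup W]
    (nabla : X → W → W) (omega : X → X → W) (brkt : W → W → W) :
    X × W → X × W → X × W :=
  fun a b =>
    (⁅a.1, b.1⁆, nabla a.1 b.2 - nabla b.1 a.2 - omega a.1 b.1 + brkt a.2 b.2)

/-- The Lagrange–Poincaré bracket on `Γ(TQ ⊕ V)` is a Lie bracket (i.e. satisfies
the Jacobi identity; bilinearity and skew-symmetry are automatic) if and only if
(a) `d_∇ ω = 0`, (b) `∇` is a derivation of the fiberwise bracket, and
(c) `k_∇(X,Y)v = −[ω(X,Y), v]`. -/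
theorem lpBracket_isLie_iff
    {X W : Type*} [LieRing X] [AddCommGroup W]
    (nabla : X → W → W) (omega : X → X → W) (brkt : W → W → W)
    -- `∇` is additive in each argument (part of being an affine connection)
    (hnabla_add₁ : ∀ (Y Z : X) (w : W), nabla (Y + Z) w = nabla Y w + nabla Z w)
    (hnabla_add₂ : ∀ (Y : X) (v w : W), nabla Y (v + w) = nabla Y v + nabla Y w)
    -- `ω` is a `V`-valued 2-form: additive in each argument and alternating
    (homega_add₁ : ∀ Y₁ Y₂ Z : X, omega (Y₁ + Y₂) Z = omega Y₁ Z + omega Y₂ Z)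
    (homega_add₂ : ∀ Y Z₁ Z₂ : X, omega Y (Z₁ + Z₂) = omega Y Z₁ + omega Y Z₂)
    (homega_alt : ∀ Y : X, omega Y Y = 0)
    -- the fiberwise bracket makes `V` a Lie algebra bundle
    (hbrkt_add₁ : ∀ u v w : W, brkt (u + v) w = brkt u w + brkt v w)
    (hbrkt_add₂ : ∀ u v w : W, brkt u (v + w) = brkt u v + brkt u w)
    (hbrkt_alt : ∀ v : W, brkt v v = 0)
    (hbrkt_jacobi : ∀ u v w : W,
      brkt u (brkt v w) + brkt v (brkt w u) + brkt w (brkt u v) = 0) :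
    -- the Jacobi identity (in cyclic form) for the Lagrange–Poincaré bracket ...
    (∀ a b c : X × W,
        lpBracket nabla omega brkt a (lpBracket nabla omega brkt b c) +
        lpBracket nabla omega brkt b (lpBracket nabla omega brkt c a) +
        lpBracket nabla omega brkt c (lpBracket nabla omega brkt a b) = 0)
    ↔
    -- ... is equivalent to the three conditions:
    -- (a) d_∇ ω = 0
    ((∀ X₁ X₂ X₃ : X,
        (nabla X₁ (omega X₂ X₃) + omega X₁ ⁅X₂, X₃⁆) +
        (nabla X₂ (omega X₃ X₁) + omega X₂ ⁅X₃, X₁⁆) +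
        (nabla X₃ (omega X₁ X₂) + omega X₃ ⁅X₁, X₂⁆) = 0) ∧
    -- (b) ∇_X [v,w] = [∇_X v, w] + [v, ∇_X w]
    (∀ (Y : X) (v w : W),
        nabla Y (brkt v w) = brkt (nabla Y v) w + brkt v (nabla Y w)) ∧
    -- (c) k_∇(X,Y) v = −[ω(X,Y), v]
    (∀ (Y Z : X) (v : W),
        nabla Y (nabla Z v) - nabla Z (nabla Y v) - nabla ⁅Y, Z⁆ v
          = - brkt (omega Y Z) v)) := by
  -- derived facts about `nabla`
  have n0₂ : ∀ Y : X, nabla Y 0 = 0 := fun Y => by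
    have h := hnabla_add₂ Y 0 0
    rw [add_zero] at h
    exact left_eq_add.mp h
  have n0₁ : ∀ w : W, nabla 0 w = 0 := fun w => by
    have h := hnabla_add₁ 0 0 w
    rw [add_zero] at h
    exact left_eq_add.mp h
  have nneg₂ : ∀ (Y : X) (w : W), nabla Y (-w) = -nabla Y w := fun Y w => by
    have h := hnabla_add₂ Y w (-w)
    rw [add_neg_cancel, n0₂] at h
    linear_combination (norm := abel1) -h
  have nsub₂ : ∀ (Y : X) (v w : W), nabla Y (v - w) = nabla Y v - nabla Y w := fun Y v w => by
    rw [sub_eq_add_neg, hnabla_add₂, nneg₂, ← sub_eq_add_neg]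
  -- derived facts about `omega`
  have o0₁ : ∀ Z : X, omega 0 Z = 0 := fun Z => by
    have h := homega_add₁ 0 0 Z
    rw [add_zero] at h
    exact left_eq_add.mp h
  have o0₂ : ∀ Y : X, omega Y 0 = 0 := fun Y => by
    have h := homega_add₂ Y 0 0
    rw [add_zero] at h
    exact left_eq_add.mp h
  -- derived facts about `brkt`
  have b0₁ : ∀ w : W, brkt 0 w = 0 := fun w => by
    have h := hbrkt_add₁ 0 0 w
    rw [add_zero] at h
    exact left_eq_add.mp h
  have b0₂ : ∀ v : W, brkt v 0 = 0 := fun v => by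
    have h := hbrkt_add₂ v 0 0
    rw [add_zero] at h
    exact left_eq_add.mp h
  have bneg₂ : ∀ v w : W, brkt v (-w) = -brkt v w := fun v w => by
    have h := hbrkt_add₂ v w (-w)
    rw [add_neg_cancel, b0₂] at h
    linear_combination (norm := abel1) -h
  have bsub₂ : ∀ u v w : W, brkt u (v - w) = brkt u v - brkt u w := fun u v w => by
    rw [sub_eq_add_neg, hbrkt_add₂, bneg₂, ← sub_eq_add_neg]
  have bskew : ∀ v w : W, brkt v w = -brkt w v := fun v w => by
    have h := hbrkt_alt (v + w)
    rw [hbrkt_add₁, hbrkt_add₂, hbrkt_add₂, hbrkt_alt, hbrkt_alt] at h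
    linear_combination (norm := abel1) h
  constructor
  · intro h
    refine ⟨?_, ?_, ?_⟩
    · intro X₁ X₂ X₃
      have H := congrArg Prod.snd (h (X₁, 0) (X₂, 0) (X₃, 0))
      simp only [lpBracket, Prod.snd_add, n0₂, b0₁, b0₂, nneg₂, o0₁, o0₂, n0₁,
        sub_zero, zero_sub, add_zero, zero_add, neg_zero, Prod.snd_zero] at H
      linear_combination (norm := abel1) -H
    · intro Y v w
      have H := congrArg Prod.snd (h (Y, 0) ((0 : X), v) ((0 : X), w))
      simp only [lpBracket, Prod.snd_add, lie_zero, zero_lie, n0₂, n0₁, b0₁, b0₂, nneg₂, o0₁, o0₂, bneg₂,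
        sub_zero, zero_sub, add_zero, zero_add, neg_zero, neg_neg, Prod.snd_zero] at H
      linear_combination (norm := abel1) H - bskew w (nabla Y v)
    · intro Y Z v
      have H := congrArg Prod.snd (h (Y, 0) (Z, 0) ((0 : X), v))
      simp only [lpBracket, Prod.snd_add, lie_zero, zero_lie, n0₂, n0₁, b0₁, b0₂, nneg₂, o0₁, o0₂, bneg₂,
        sub_zero, zero_sub, add_zero, zero_add, neg_zero, neg_neg, Prod.snd_zero] at H
      linear_combination (norm := abel1) H + bskew v (omega Y Z)
  · rintro ⟨ha, hb, hc⟩ ⟨X₁, w₁⟩ ⟨X₂, w₂⟩ ⟨X₃, w₃⟩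
    have hfst : ⁅X₁, ⁅X₂, X₃⁆⁆ + ⁅X₂, ⁅X₃, X₁⁆⁆ + ⁅X₃, ⁅X₁, X₂⁆⁆ = 0 := lie_jacobi X₁ X₂ X₃
    simp only [lpBracket, Prod.mk_add_mk, Prod.mk_eq_zero]
    refine ⟨hfst, ?_⟩
    simp only [hnabla_add₂, nsub₂, hbrkt_add₂, bsub₂]
    linear_combination (norm := abel1)
      -ha X₁ X₂ X₃
      + hc X₁ X₂ w₃ + hc X₂ X₃ w₁ + hc X₃ X₁ w₂
      - bskew w₃ (omega X₁ X₂) - bskew w₁ (omega X₂ X₃) - bskew w₂ (omega X₃ X₁)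
      + hb X₁ w₂ w₃ + hb X₂ w₃ w₁ + hb X₃ w₁ w₂
      + bskew w₃ (nabla X₁ w₂) + bskew w₁ (nabla X₂ w₃) + bskew w₂ (nabla X₃ w₁)
      + hbrkt_jacobi w₁ w₂ w₃
end

section
/- Under the identification TQ/G ≅ T(Q/G) ⊕ g̃ induced by a principal connection A on Q → Q/G, the reduced Noether pairing j̃(ẋ, ξ̄, η̄) := J̃(ẋ^h_q + ξ^Q_q, η) equals the vertical fiber derivative of the reduced Lagrangian: j̃(ẋ, ξ̄, η̄) = ⟨∂l/∂ξ̄ (ẋ ⊕ ξ̄), η̄⟩. -/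
/-!
Model at a fixed point `q ∈ Q` over `x = π(q) ∈ Q/G` of the identification
`TQ/G ≅ T(Q/G) ⊕ g̃` induced by a principal connection `A`:
`E` models `T_x(Q/G)`, `Tq` models `T_qQ`, `𝔤` models the Lie algebra of `G`
(whose elements represent the fiber of the adjoint bundle `g̃` at `x`, via
`ξ ↔ ξ̄ = [q,ξ]_G`), `hor` is the horizontal lift `ẋ ↦ ẋ^h_q` with respect to `A`,
and `gen ξ = ξ^Q_q` is the infinitesimal generator.  `L` is the restriction of the
`G`-invariant Lagrangian to `T_qQ` and `l(ẋ,ξ̄) = L(ẋ^h_q + ξ^Q_q)` the reduced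
Lagrangian; fiber derivatives are directional derivatives.
-/

/-- The reduced Noether pairing `j̃(ẋ,ξ̄,η̄) = J̃(ẋ^h_q + ξ^Q_q, η)` equals the
vertical fiber derivative of the reduced Lagrangian: `j̃(ẋ,ξ̄,η̄) = ⟨∂l/∂ξ̄(ẋ⊕ξ̄), η̄⟩`. -/
theorem reduced_noether_eq_vertical_fiber_derivative
    {E Tq 𝔤 : Type*}
    [NormedAddCommGroup E] [NormedSpace ℝ E]
    [NormedAddCommGroup Tq] [NormedSpace ℝ Tq]
    [AddCommGroup 𝔤] [Module ℝ 𝔤]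
    (L : Tq → ℝ)
    (hor : E →ₗ[ℝ] Tq)        -- horizontal lift `ẋ ↦ ẋ^h_q` w.r.t. `A`
    (gen : 𝔤 →ₗ[ℝ] Tq)        -- infinitesimal generator `ξ ↦ ξ^Q_q`
    -- the reduced Lagrangian `l(ẋ, ξ̄) = L(ẋ^h_q + ξ^Q_q)`
    (l : E → 𝔤 → ℝ)
    (hl : ∀ (x : E) (ξ : 𝔤), l x ξ = L (hor x + gen ξ))
    -- `J̃(v, η) = ⟨∂L/∂v̇(v), η^Q⟩`
    (Jt : Tq → 𝔤 → ℝ)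
    (hJt : ∀ (v : Tq) (η : 𝔤), Jt v η = deriv (fun s : ℝ => L (v + s • gen η)) 0)
    -- the reduced Noether pairing `j̃(ẋ, ξ̄, η̄) = J̃(ẋ^h_q + ξ^Q_q, η)`
    (jt : E → 𝔤 → 𝔤 → ℝ)
    (hjt : ∀ (x : E) (ξ η : 𝔤), jt x ξ η = Jt (hor x + gen ξ) η) :
    -- conclusion: `j̃(ẋ, ξ̄, η̄) = ⟨∂l/∂ξ̄(ẋ ⊕ ξ̄), η̄⟩`
    ∀ (x : E) (ξ η : 𝔤),
      jt x ξ η = deriv (fun s : ℝ => l x (ξ + s • η)) 0 := by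
  intro x ξ η
  rw [hjt, hJt]
  congr 1
  funext s
  rw [hl]
  congr 1
  simp [map_add, map_smul, add_assoc]
end

section
/- For the Poisson bracket on T*Q ⊕ V* and linear momentum functions P(X⊕w), one has ⟨∂P(X₁⊕w₁)/∂q, X₂⟩ = P((X₂ applied to X₁ pointwise along the connection decomposition)) + P(∇_{X₂}w₁), and consequently {P(X₁⊕w₁), P(X₂⊕w₂)} = −P([X₁,X₂]) + P(∇_{X₂}w₁ − ∇_{X₁}w₂) + P(ω(X₁,X₂) − [w₁,w₂]) = −P([X₁⊕w₁, X₂⊕w₂]). -/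
/-!
Local model of the dual `T*Q ⊕ V*` of a Lagrange–Poincaré bundle `TQ ⊕ V`, as in the
paper's coordinate computation: `Q` is a chart `Fin n → ℝ`, `V` is trivialized with a
flat connection `∇` (so `∇_X w = dw(X)` and the Christoffel symbols vanish), `ω q` is
the `V`-valued 2-form and `c` the fiberwise Lie bracket; `T*Q ⊕ V*` is `Phase n m`
with coordinates `(q, p, ν)`.
-/

abbrev Phase (n m : ℕ) := (Fin n → ℝ) × (Fin n → ℝ) × (Fin m → ℝ)

noncomputable def Dq {n m : ℕ} (f : Phase n m → ℝ) (x : Phase n m) : Fin n → ℝ :=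
  fun i => fderiv ℝ f x (Pi.single i 1, 0, 0)

noncomputable def Dp {n m : ℕ} (f : Phase n m → ℝ) (x : Phase n m) : Fin n → ℝ :=
  fun i => fderiv ℝ f x (0, Pi.single i 1, 0)

noncomputable def Dnu {n m : ℕ} (f : Phase n m → ℝ) (x : Phase n m) : Fin m → ℝ :=
  fun α => fderiv ℝ f x (0, 0, Pi.single α 1)

/-- The Lagrange–Poincaré Poisson bracket. -/
noncomputable def lpPoisson {n m : ℕ}
    (ω : (Fin n → ℝ) → (Fin n → ℝ) → (Fin n → ℝ) → (Fin m → ℝ))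
    (c : (Fin m → ℝ) → (Fin m → ℝ) → (Fin m → ℝ))
    (f g : Phase n m → ℝ) : Phase n m → ℝ :=
  fun x =>
    (∑ i, (Dq f x i * Dp g x i - Dq g x i * Dp f x i))
      + (∑ α, x.2.2 α * ω x.1 (Dp f x) (Dp g x) α)
      + (∑ α, x.2.2 α * c (Dnu g x) (Dnu f x) α)

/-- The momentum function `P(X⊕w)(p⊕ν) = ⟨p, X⟩ + ⟨ν, w⟩`. -/
def momP {n m : ℕ} (X : (Fin n → ℝ) → (Fin n → ℝ))
    (w : (Fin n → ℝ) → (Fin m → ℝ)) : Phase n m → ℝ :=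
  fun x => (∑ i, x.2.1 i * X x.1 i) + (∑ α, x.2.2 α * w x.1 α)

/-!
A momentum function is linear in the fibre coordinates `(p, ν)`, so `∂P(X⊕w)/∂p = X` and
`∂P(X⊕w)/∂ν = w`, while its `q`-derivative paired with a vector `v` is `P(dX(v) ⊕ dw(v))`:
with a flat trivialization this is the covariant derivative `∇_v`. Substituting into the
bracket, the canonical part becomes `P(dX₁(X₂) ⊕ dw₁(X₂)) − P(dX₂(X₁) ⊕ dw₂(X₁))`, the curvature
part is `⟨ν, ω(X₁, X₂)⟩`, and skew-symmetry of `c` turns `⟨ν, c(w₂, w₁)⟩` into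
`−⟨ν, c(w₁, w₂)⟩`.
-/

theorem fderiv_sum_mul_apply {E : Type*} [NormedAddCommGroup E] [NormedSpace ℝ E] {k : ℕ}
    {a b : E → Fin k → ℝ} {x : E} (ha : DifferentiableAt ℝ a x) (hb : DifferentiableAt ℝ b x)
    (v : E) :
    fderiv ℝ (fun y => ∑ i, a y i * b y i) x v
      = ∑ i, (fderiv ℝ a x v i * b x i + a x i * fderiv ℝ b x v i) := by
  have hcoord : ∀ i, DifferentiableAt ℝ (fun y => a y i * b y i) x := fun i =>
    (differentiableAt_pi.1 ha i).mul (differentiableAt_pi.1 hb i)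
  rw [fderiv_fun_sum fun i _ => hcoord i, sum_apply]
  refine Finset.sum_congr rfl fun i _ => ?_
  rw [fderiv_fun_mul (differentiableAt_pi.1 ha i) (differentiableAt_pi.1 hb i),
    fderiv_apply ha, fderiv_apply hb]
  simp only [add_apply, smul_apply, ContinuousLinearMap.comp_apply,
    ContinuousLinearMap.proj_apply, smul_eq_mul]
  ring

section Momentum

variable {n m : ℕ} {X : (Fin n → ℝ) → (Fin n → ℝ)} {w : (Fin n → ℝ) → (Fin m → ℝ)}

theorem sum_Dq_mul (f : Phase n m → ℝ) (x : Phase n m) (v : Fin n → ℝ) :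
    ∑ j, Dq f x j * v j = fderiv ℝ f x (v, 0, 0) := by
  let L := (fderiv ℝ f x).comp (.inl ℝ (Fin n → ℝ) ((Fin n → ℝ) × (Fin m → ℝ)))
  change _ = L v
  conv_rhs => rw [pi_eq_sum_univ' v]
  simp only [map_sum, map_smul, smul_eq_mul, mul_comm]
  rfl

theorem fderiv_momP_apply (hX : Differentiable ℝ X) (hw : Differentiable ℝ w)
    (x v : Phase n m) :
    fderiv ℝ (momP X w) x v
      = ∑ i, (v.2.1 i * X x.1 i + x.2.1 i * fderiv ℝ X x.1 v.1 i)
        + ∑ α, (v.2.2 α * w x.1 α + x.2.2 α * fderiv ℝ w x.1 v.1 α) := by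
  have hp : HasFDerivAt (fun y : Phase n m => y.2.1)
      ((ContinuousLinearMap.fst ℝ _ _).comp (.snd ℝ _ _)) x := hasFDerivAt_snd.fst
  have hν : HasFDerivAt (fun y : Phase n m => y.2.2)
      ((ContinuousLinearMap.snd ℝ _ _).comp (.snd ℝ _ _)) x := hasFDerivAt_snd.snd
  have hXq : HasFDerivAt (fun y : Phase n m => X y.1)
      ((fderiv ℝ X x.1).comp (.fst ℝ _ _)) x := (hX x.1).hasFDerivAt.comp x hasFDerivAt_fst
  have hwq : HasFDerivAt (fun y : Phase n m => w y.1)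
      ((fderiv ℝ w x.1).comp (.fst ℝ _ _)) x := (hw x.1).hasFDerivAt.comp x hasFDerivAt_fst
  unfold momP
  rw [fderiv_fun_add (by fun_prop) (by fun_prop), add_apply,
    fderiv_sum_mul_apply hp.differentiableAt hXq.differentiableAt,
    fderiv_sum_mul_apply hν.differentiableAt hwq.differentiableAt,
    hp.fderiv, hν.fderiv, hXq.fderiv, hwq.fderiv]
  rfl

theorem Dp_momP (hX : Differentiable ℝ X) (hw : Differentiable ℝ w) (x : Phase n m) :
    Dp (momP X w) x = X x.1 := by
  ext j
  simp [Dp, fderiv_momP_apply hX hw, Pi.single_apply]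

theorem Dnu_momP (hX : Differentiable ℝ X) (hw : Differentiable ℝ w) (x : Phase n m) :
    Dnu (momP X w) x = w x.1 := by
  ext α
  simp [Dnu, fderiv_momP_apply hX hw, Pi.single_apply]

theorem sum_Dq_momP_mul (hX : Differentiable ℝ X) (hw : Differentiable ℝ w)
    (x : Phase n m) (v : Fin n → ℝ) :
    ∑ j, Dq (momP X w) x j * v j
      = ∑ i, x.2.1 i * fderiv ℝ X x.1 v i + ∑ α, x.2.2 α * fderiv ℝ w x.1 v α := by
  simp [sum_Dq_mul, fderiv_momP_apply hX hw]

end Momentum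

/-- `⟨∂P(X₁⊕w₁)/∂q, X₂⟩ = P(∇_{X₂}X₁ ⊕ 0) + P(0 ⊕ ∇_{X₂}w₁)`, and consequently
`{P(X₁⊕w₁), P(X₂⊕w₂)} = −P([X₁,X₂]) + P(∇_{X₂}w₁ − ∇_{X₁}w₂) + P(ω(X₁,X₂) − [w₁,w₂])
= −P([X₁⊕w₁, X₂⊕w₂])`. -/
theorem lpPoisson_momentum_functions {n m : ℕ}
    (ω : (Fin n → ℝ) → (Fin n → ℝ) → (Fin n → ℝ) → (Fin m → ℝ))
    (c : (Fin m → ℝ) → (Fin m → ℝ) → (Fin m → ℝ))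
    -- the fiberwise Lie bracket is skew-symmetric
    (hc_skew : ∀ u v, c u v = -c v u)
    (X₁ X₂ : (Fin n → ℝ) → (Fin n → ℝ)) (w₁ w₂ : (Fin n → ℝ) → (Fin m → ℝ))
    (hX₁ : Differentiable ℝ X₁) (hX₂ : Differentiable ℝ X₂)
    (hw₁ : Differentiable ℝ w₁) (hw₂ : Differentiable ℝ w₂) :
    -- `⟨∂P(X₁⊕w₁)/∂q, X₂⟩ = P((∇_{X₂}X₁) ⊕ 0) + P(0 ⊕ ∇_{X₂}w₁)`
    (∀ x : Phase n m,
      (∑ j, Dq (momP X₁ w₁) x j * X₂ x.1 j)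
        = (∑ i, x.2.1 i * fderiv ℝ X₁ x.1 (X₂ x.1) i)
          + (∑ α, x.2.2 α * fderiv ℝ w₁ x.1 (X₂ x.1) α)) ∧
    -- `{P(X₁⊕w₁), P(X₂⊕w₂)} = −P([X₁⊕w₁, X₂⊕w₂])`
    (∀ x : Phase n m,
      lpPoisson ω c (momP X₁ w₁) (momP X₂ w₂) x
        = -(momP (fun q => fderiv ℝ X₂ q (X₁ q) - fderiv ℝ X₁ q (X₂ q))
              (fun q => fderiv ℝ w₂ q (X₁ q) - fderiv ℝ w₁ q (X₂ q)
                          - ω q (X₁ q) (X₂ q) + c (w₁ q) (w₂ q)) x)) := by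
  refine ⟨fun x => sum_Dq_momP_mul hX₁ hw₁ x (X₂ x.1), fun x => ?_⟩
  simp only [lpPoisson, Finset.sum_sub_distrib, sum_Dq_momP_mul hX₁ hw₁,
    sum_Dq_momP_mul hX₂ hw₂, Dp_momP hX₁ hw₁, Dp_momP hX₂ hw₂, Dnu_momP hX₁ hw₁,
    Dnu_momP hX₂ hw₂, hc_skew (w₂ x.1), momP, Pi.add_apply, Pi.sub_apply, Pi.neg_apply,
    mul_add, mul_sub, mul_neg, Finset.sum_add_distrib, Finset.sum_neg_distrib]
  ring
end

section
/- For the Hamiltonian vector field X_H of H: T*Q ⊕ V* → ℝ with respect to the LP Poisson bracket, the integral-curve (Hamilton–Poincaré) equations are: q̇ = ∂H/∂p, Dp/dt = −∂H/∂q + ⟨ν, ω(·, ∂H/∂p)⟩, and ∇ν/dt = ad*_{∂H/∂ν} ν; i.e., X_H = (∂H/∂p, −∂H/∂q + ⟨ν, ω(·, ∂H/∂p)⟩, ad*_{∂H/∂ν} ν) in the decomposition induced by the connection. -/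
noncomputable def Pq {n m : ℕ} (i : Fin n) : Phase n m →L[ℝ] ℝ :=
  (ContinuousLinearMap.proj i).comp
    (ContinuousLinearMap.fst ℝ (Fin n → ℝ) ((Fin n → ℝ) × (Fin m → ℝ)))

noncomputable def Pp {n m : ℕ} (i : Fin n) : Phase n m →L[ℝ] ℝ :=
  ((ContinuousLinearMap.proj i).comp
    (ContinuousLinearMap.fst ℝ (Fin n → ℝ) (Fin m → ℝ))).comp
    (ContinuousLinearMap.snd ℝ (Fin n → ℝ) ((Fin n → ℝ) × (Fin m → ℝ)))

noncomputable def Pν {n m : ℕ} (α : Fin m) : Phase n m →L[ℝ] ℝ :=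
  ((ContinuousLinearMap.proj α).comp
    (ContinuousLinearMap.snd ℝ (Fin n → ℝ) (Fin m → ℝ))).comp
    (ContinuousLinearMap.snd ℝ (Fin n → ℝ) ((Fin n → ℝ) × (Fin m → ℝ)))

lemma sum_single_smul {k : ℕ} (u : Fin k → ℝ) :
    ∑ i, u i • (Pi.single i 1 : Fin k → ℝ) = u := by
  funext j
  rw [Finset.sum_apply]
  simp [Pi.single_apply]

lemma lin_expand {k : ℕ} {M : Type*} [AddCommMonoid M] [Module ℝ M]
    (g : (Fin k → ℝ) → M)
    (hadd : ∀ u u', g (u + u') = g u + g u')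
    (hsmul : ∀ (a : ℝ) u, g (a • u) = a • g u) (u : Fin k → ℝ) :
    g u = ∑ i, u i • g (Pi.single i 1) := by
  have hg : IsLinearMap ℝ g := ⟨hadd, hsmul⟩
  calc g u = IsLinearMap.mk' g hg u := rfl
    _ = IsLinearMap.mk' g hg (∑ i, u i • (Pi.single i 1 : Fin k → ℝ)) := by rw [sum_single_smul]
    _ = ∑ i, u i • g (Pi.single i 1) := by rw [map_sum]; simp

lemma single_swap {k : ℕ} (i : Fin k) :
    (fun j : Fin k => (Pi.single j 1 : Fin k → ℝ) i) = Pi.single i 1 := by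
  funext j
  simp [Pi.single_apply, eq_comm]

lemma clm_decomp {n m : ℕ} (φ : Phase n m →L[ℝ] ℝ) (v : Phase n m) :
    φ v = (∑ i, v.1 i * φ (Pi.single i 1, 0, 0))
        + (∑ i, v.2.1 i * φ (0, Pi.single i 1, 0))
        + (∑ α, v.2.2 α * φ (0, 0, Pi.single α 1)) := by
  obtain ⟨q, p, ν⟩ := v
  have hsplit : (q, p, ν) = ((q, 0, 0) : Phase n m) + (0, p, 0) + (0, 0, ν) := by
    simp [Prod.ext_iff]
  have h1 : φ (q, 0, 0) = ∑ i, q i * φ (Pi.single i 1, 0, 0) := by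
    have := lin_expand (fun u : Fin n → ℝ => φ (u, 0, 0))
      (by intro u u'
          show φ (u + u', 0, 0) = φ (u, 0, 0) + φ (u', 0, 0)
          rw [show ((u + u', 0, 0) : Phase n m) = (u, 0, 0) + (u', 0, 0) by
              simp [Prod.ext_iff], map_add])
      (by intro a u
          show φ (a • u, 0, 0) = a • φ (u, 0, 0)
          rw [show ((a • u, 0, 0) : Phase n m) = a • ((u, 0, 0) : Phase n m) by
              simp [Prod.ext_iff], map_smul]) q
    simpa [smul_eq_mul] using this
  have h2 : φ (0, p, 0) = ∑ i, p i * φ (0, Pi.single i 1, 0) := by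
    have := lin_expand (fun u : Fin n → ℝ => φ (0, u, 0))
      (by intro u u'
          show φ (0, u + u', 0) = φ (0, u, 0) + φ (0, u', 0)
          rw [show ((0, u + u', 0) : Phase n m) = (0, u, 0) + (0, u', 0) by
              simp [Prod.ext_iff], map_add])
      (by intro a u
          show φ (0, a • u, 0) = a • φ (0, u, 0)
          rw [show ((0, a • u, 0) : Phase n m) = a • ((0, u, 0) : Phase n m) by
              simp [Prod.ext_iff], map_smul]) p
    simpa [smul_eq_mul] using this
  have h3 : φ (0, 0, ν) = ∑ α, ν α * φ (0, 0, Pi.single α 1) := by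
    have := lin_expand (fun u : Fin m → ℝ => φ (0, 0, u))
      (by intro u u'
          show φ (0, 0, u + u') = φ (0, 0, u) + φ (0, 0, u')
          rw [show ((0, 0, u + u') : Phase n m) = (0, 0, u) + (0, 0, u') by
              simp [Prod.ext_iff], map_add])
      (by intro a u
          show φ (0, 0, a • u) = a • φ (0, 0, u)
          rw [show ((0, 0, a • u) : Phase n m) = a • ((0, 0, u) : Phase n m) by
              simp [Prod.ext_iff], map_smul]) ν
    simpa [smul_eq_mul] using this
  calc φ (q, p, ν) = φ ((q,0,0) + (0,p,0) + (0,0,ν)) := by rw [← hsplit]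
    _ = φ (q,0,0) + φ (0,p,0) + φ (0,0,ν) := by rw [map_add, map_add]
    _ = _ := by rw [h1, h2, h3]

lemma swap_mul {ι κ : Type*} [Fintype ι] [Fintype κ]
    (a : ι → ℝ) (b : κ → ℝ) (W : κ → ι → ℝ) :
    ∑ α, a α * ∑ i, b i * W i α = ∑ i, b i * ∑ α, a α * W i α := by
  simp_rw [Finset.mul_sum]
  rw [Finset.sum_comm]
  exact Finset.sum_congr rfl fun i _ => Finset.sum_congr rfl fun α _ => by ring

/-- A curve `z(t) = (q(t), p(t), ν(t))` in `T*Q ⊕ V*` is an integral curve of the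
Hamiltonian vector field `X_H` of the LP Poisson bracket if and only if it satisfies
the Hamilton–Poincaré equations `q̇ = ∂H/∂p`,
`Dp/dt = −∂H/∂q + ⟨ν, ω(·, ∂H/∂p)⟩`, `∇ν/dt = ad*_{∂H/∂ν} ν`. -/
theorem hamilton_poincare_equations {n m : ℕ}
    (ω : (Fin n → ℝ) → (Fin n → ℝ) → (Fin n → ℝ) → (Fin m → ℝ))
    (c : (Fin m → ℝ) → (Fin m → ℝ) → (Fin m → ℝ))
    -- fiberwise bilinearity of `ω` and `c`, and smoothness of `ω`
    (hω_add₁ : ∀ q u u' v, ω q (u + u') v = ω q u v + ω q u' v)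
    (hω_smul₁ : ∀ q (a : ℝ) u v, ω q (a • u) v = a • ω q u v)
    (hω_add₂ : ∀ q u v v', ω q u (v + v') = ω q u v + ω q u v')
    (hω_smul₂ : ∀ q u (a : ℝ) v, ω q u (a • v) = a • ω q u v)
    (hω_smooth : ∀ u v, ContDiff ℝ (⊤ : ℕ∞) (fun q => ω q u v))
    (hc_add₁ : ∀ u u' v, c (u + u') v = c u v + c u' v)
    (hc_smul₁ : ∀ (a : ℝ) u v, c (a • u) v = a • c u v)
    (hc_add₂ : ∀ u v v', c u (v + v') = c u v + c u v')
    (hc_smul₂ : ∀ u (a : ℝ) v, c u (a • v) = a • c u v)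
    -- the Hamiltonian and the curve
    (H : Phase n m → ℝ) (hH : ContDiff ℝ (⊤ : ℕ∞) H)
    (z : ℝ → Phase n m) (hz : Differentiable ℝ z) :
    -- `z` is an integral curve of `X_H` ...
    (∀ f : Phase n m → ℝ, ContDiff ℝ (⊤ : ℕ∞) f →
      ∀ t : ℝ, deriv (fun s => f (z s)) t = lpPoisson ω c f H (z t))
    ↔
    -- ... iff the Hamilton–Poincaré equations hold:
    (∀ t : ℝ,
      -- `q̇ = ∂H/∂p`
      (∀ i, deriv (fun s => (z s).1 i) t = Dp H (z t) i) ∧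
      -- `ṗ = −∂H/∂q + ⟨ν, ω(·, ∂H/∂p)⟩`
      (∀ i, deriv (fun s => (z s).2.1 i) t
        = -Dq H (z t) i + ∑ α, (z t).2.2 α * ω (z t).1 (Pi.single i 1) (Dp H (z t)) α) ∧
      -- `ν̇ = ad*_{∂H/∂ν} ν`, i.e. `⟨ν̇, η⟩ = ⟨ν, [∂H/∂ν, η]⟩`
      (∀ α, deriv (fun s => (z s).2.2 α) t
        = ∑ β, (z t).2.2 β * c (Dnu H (z t)) (Pi.single α 1) β)) := by
  -- zero lemmas from bilinearity
  have ω0₁ : ∀ q w, ω q 0 w = 0 := fun q w => by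
    have h := hω_smul₁ q 0 0 w; simpa using h
  have c0₂ : ∀ w, c w 0 = 0 := fun w => by
    have h := hc_smul₂ w 0 0; simpa using h
  -- derivatives of the coordinate functions
  have fdq : ∀ (i : Fin n) (x : Phase n m),
      fderiv ℝ (fun x : Phase n m => x.1 i) x = Pq i := fun i x => (Pq i).fderiv
  have fdp : ∀ (i : Fin n) (x : Phase n m),
      fderiv ℝ (fun x : Phase n m => x.2.1 i) x = Pp i := fun i x => (Pp i).fderiv
  have fdν : ∀ (α : Fin m) (x : Phase n m),
      fderiv ℝ (fun x : Phase n m => x.2.2 α) x = Pν α := fun α x => (Pν α).fderiv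
  have Dq_q : ∀ (i : Fin n) (x : Phase n m),
      Dq (fun x : Phase n m => x.1 i) x = Pi.single i 1 := by
    intro i x; funext j
    show fderiv ℝ (fun x : Phase n m => x.1 i) x (Pi.single j 1, 0, 0) = _
    rw [fdq]
    exact (congrFun (single_swap i) j)
  have Dp_q : ∀ (i : Fin n) (x : Phase n m),
      Dp (fun x : Phase n m => x.1 i) x = 0 := by
    intro i x; funext j
    show fderiv ℝ (fun x : Phase n m => x.1 i) x (0, Pi.single j 1, 0) = _
    rw [fdq]; rfl
  have Dnu_q : ∀ (i : Fin n) (x : Phase n m),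
      Dnu (fun x : Phase n m => x.1 i) x = 0 := by
    intro i x; funext j
    show fderiv ℝ (fun x : Phase n m => x.1 i) x (0, 0, Pi.single j 1) = _
    rw [fdq]; rfl
  have Dq_p : ∀ (i : Fin n) (x : Phase n m),
      Dq (fun x : Phase n m => x.2.1 i) x = 0 := by
    intro i x; funext j
    show fderiv ℝ (fun x : Phase n m => x.2.1 i) x (Pi.single j 1, 0, 0) = _
    rw [fdp]; rfl
  have Dp_p : ∀ (i : Fin n) (x : Phase n m),
      Dp (fun x : Phase n m => x.2.1 i) x = Pi.single i 1 := by
    intro i x; funext j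
    show fderiv ℝ (fun x : Phase n m => x.2.1 i) x (0, Pi.single j 1, 0) = _
    rw [fdp]
    exact (congrFun (single_swap i) j)
  have Dnu_p : ∀ (i : Fin n) (x : Phase n m),
      Dnu (fun x : Phase n m => x.2.1 i) x = 0 := by
    intro i x; funext j
    show fderiv ℝ (fun x : Phase n m => x.2.1 i) x (0, 0, Pi.single j 1) = _
    rw [fdp]; rfl
  have Dq_ν : ∀ (α : Fin m) (x : Phase n m),
      Dq (fun x : Phase n m => x.2.2 α) x = 0 := by
    intro α x; funext j
    show fderiv ℝ (fun x : Phase n m => x.2.2 α) x (Pi.single j 1, 0, 0) = _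
    rw [fdν]; rfl
  have Dp_ν : ∀ (α : Fin m) (x : Phase n m),
      Dp (fun x : Phase n m => x.2.2 α) x = 0 := by
    intro α x; funext j
    show fderiv ℝ (fun x : Phase n m => x.2.2 α) x (0, Pi.single j 1, 0) = _
    rw [fdν]; rfl
  have Dnu_ν : ∀ (α : Fin m) (x : Phase n m),
      Dnu (fun x : Phase n m => x.2.2 α) x = Pi.single α 1 := by
    intro α x; funext β
    show fderiv ℝ (fun x : Phase n m => x.2.2 α) x (0, 0, Pi.single β 1) = _
    rw [fdν]
    exact (congrFun (single_swap α) β)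
  -- derivatives of the coordinate curves
  have hzq : ∀ (i : Fin n) (t : ℝ),
      HasDerivAt (fun s => (z s).1 i) ((deriv z t).1 i) t := fun i t =>
    (Pq i).hasFDerivAt.comp_hasDerivAt t (hz t).hasDerivAt
  have hzp : ∀ (i : Fin n) (t : ℝ),
      HasDerivAt (fun s => (z s).2.1 i) ((deriv z t).2.1 i) t := fun i t =>
    (Pp i).hasFDerivAt.comp_hasDerivAt t (hz t).hasDerivAt
  have hzν : ∀ (α : Fin m) (t : ℝ),
      HasDerivAt (fun s => (z s).2.2 α) ((deriv z t).2.2 α) t := fun α t =>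
    (Pν α).hasFDerivAt.comp_hasDerivAt t (hz t).hasDerivAt
  constructor
  · -- integral curve ⇒ Hamilton–Poincaré equations
    intro h t
    refine ⟨?_, ?_, ?_⟩
    · intro i
      calc deriv (fun s => (z s).1 i) t
          = lpPoisson ω c (fun x => x.1 i) H (z t) := h _ (Pq (m := m) i).contDiff t
        _ = Dp H (z t) i := by
            simp [lpPoisson, Dq_q, Dp_q, Dnu_q, ω0₁, c0₂, Pi.single_apply]
    · intro i
      calc deriv (fun s => (z s).2.1 i) t
          = lpPoisson ω c (fun x => x.2.1 i) H (z t) := h _ (Pp (m := m) i).contDiff t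
        _ = _ := by
            simp [lpPoisson, Dq_p, Dp_p, Dnu_p, c0₂, Pi.single_apply]
    · intro α
      calc deriv (fun s => (z s).2.2 α) t
          = lpPoisson ω c (fun x => x.2.2 α) H (z t) := h _ (Pν (n := n) α).contDiff t
        _ = _ := by
            simp [lpPoisson, Dq_ν, Dp_ν, Dnu_ν, ω0₁, Pi.single_apply]
  · -- Hamilton–Poincaré equations ⇒ integral curve
    intro h f hf t
    have hfd : HasDerivAt (fun s => f (z s)) (fderiv ℝ f (z t) (deriv z t)) t :=
      (hf.differentiable (by simp) (z t)).hasFDerivAt.comp_hasDerivAt t (hz t).hasDerivAt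
    rw [hfd.deriv]
    set x := z t with hx
    set v := deriv z t with hv
    have hq : ∀ i, v.1 i = Dp H x i := fun i =>
      ((hzq i t).deriv).symm.trans ((h t).1 i)
    have hp : ∀ i, v.2.1 i
        = -Dq H x i + ∑ α, x.2.2 α * ω x.1 (Pi.single i 1) (Dp H x) α := fun i =>
      ((hzp i t).deriv).symm.trans ((h t).2.1 i)
    have hν : ∀ α, v.2.2 α
        = ∑ β, x.2.2 β * c (Dnu H x) (Pi.single α 1) β := fun α =>
      ((hzν α t).deriv).symm.trans ((h t).2.2 α)
    have hdec : fderiv ℝ f x v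
        = (∑ i, v.1 i * Dq f x i) + (∑ i, v.2.1 i * Dp f x i)
          + (∑ α, v.2.2 α * Dnu f x α) := clm_decomp (fderiv ℝ f x) v
    rw [hdec]
    simp only [hq, hp, hν]
    have hωe : ∀ α, ω x.1 (Dp f x) (Dp H x) α
        = ∑ i, Dp f x i * ω x.1 (Pi.single i 1) (Dp H x) α := by
      intro α
      have := lin_expand (fun u => ω x.1 u (Dp H x))
        (fun u u' => hω_add₁ x.1 u u' (Dp H x))
        (fun a u => hω_smul₁ x.1 a u (Dp H x)) (Dp f x)
      have := congrFun this α
      simpa [Finset.sum_apply] using this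
    have hce : ∀ α, c (Dnu H x) (Dnu f x) α
        = ∑ β, Dnu f x β * c (Dnu H x) (Pi.single β 1) α := by
      intro α
      have := lin_expand (fun u => c (Dnu H x) u)
        (fun u u' => hc_add₂ (Dnu H x) u u')
        (fun a u => hc_smul₂ (Dnu H x) a u) (Dnu f x)
      have := congrFun this α
      simpa [Finset.sum_apply] using this
    show _ = lpPoisson ω c f H x
    simp only [lpPoisson]
    simp only [hωe, hce]
    rw [swap_mul (fun α => x.2.2 α) (fun i => Dp f x i)
        (fun i α => ω x.1 (Pi.single i 1) (Dp H x) α),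
      swap_mul (fun α => x.2.2 α) (fun β => Dnu f x β)
        (fun β α => c (Dnu H x) (Pi.single β 1) α)]
    have hAB : (∑ i, Dp H x i * Dq f x i)
        + (∑ i, (-Dq H x i + ∑ α, x.2.2 α * ω x.1 (Pi.single i 1) (Dp H x) α) * Dp f x i)
        = (∑ i, (Dq f x i * Dp H x i - Dq H x i * Dp f x i))
          + (∑ i, Dp f x i * ∑ α, x.2.2 α * ω x.1 (Pi.single i 1) (Dp H x) α) := by
      rw [← Finset.sum_add_distrib, ← Finset.sum_add_distrib]
      exact Finset.sum_congr rfl fun i _ => by ring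
    have hC : (∑ α, (∑ β, x.2.2 β * c (Dnu H x) (Pi.single α 1) β) * Dnu f x α)
        = ∑ β, Dnu f x β * ∑ α, x.2.2 α * c (Dnu H x) (Pi.single β 1) α := by
      exact Finset.sum_congr rfl fun α _ => by ring
    linarith [hAB, hC]
end
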